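/- arXiv:1012.5442 — 6 statements merged into one kernel-verified Lean document; each statement's English description precedes it below -/
import Mathlib

section
/- Let m, k, l be positive integers with gcd(m, k) = 1, and let α₁, α₂, α₃, β₁, β₂, β₃ be rational numbers with mα₂ ∈ ℤ, mβ₂ ∈ ℤ, kα₂ − α₁ ∈ ℤ, kβ₂ − β₁ ∈ ℤ, lα₃ − α₁ ∈ ℤ, and lβ₃ − β₁ ∈ ℤ. Write g = gcd(k, l), m′ = ml/g, k′ = (ml − k)/g, and suppose p′, q′ ∈ ℤ satisfy l ∣ (p′k − kα₂ + lα₃) and l ∣ (q′k − kβ₂ + lβ₃). Set α₂′ = (g/l)(α₂ − p′) and β₂′ = (g/l)(β₂ − q′). Then: (i) m′α₂′ ∈ ℤ and m′β₂′ ∈ ℤ; (ii) 1 − k/(ml) = k′/m′ with gcd(k′, m′) = 1; and (iii) k′α₂′ + α₃ ∈ ℤ and k′β₂′ + β₃ ∈ ℤ. -/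
/-- the arithmetic bookkeeping step of the pole-redistribution
mechanism for chain-type potentials.  Here `g = gcd(k, l)`, `m′ = ml/g`,
`k′ = (ml − k)/g`, `α₂′ = (g/l)(α₂ − p′)`, `β₂′ = (g/l)(β₂ − q′)`. -/
theorem pole_redistribution_arithmetic
    (m k l : ℕ) (hm : 0 < m) (hk : 0 < k) (hl : 0 < l)
    (hmk : Nat.gcd m k = 1)
    (α₁ α₂ α₃ β₁ β₂ β₃ : ℚ)
    (hmα₂ : ∃ t : ℤ, (m : ℚ) * α₂ = (t : ℚ))
    (hmβ₂ : ∃ t : ℤ, (m : ℚ) * β₂ = (t : ℚ))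
    (hkα : ∃ t : ℤ, (k : ℚ) * α₂ - α₁ = (t : ℚ))
    (hkβ : ∃ t : ℤ, (k : ℚ) * β₂ - β₁ = (t : ℚ))
    (hlα : ∃ t : ℤ, (l : ℚ) * α₃ - α₁ = (t : ℚ))
    (hlβ : ∃ t : ℤ, (l : ℚ) * β₃ - β₁ = (t : ℚ))
    (g : ℕ) (hg : g = Nat.gcd k l)
    (m' k' : ℤ)
    (hm' : m' * (g : ℤ) = (m : ℤ) * (l : ℤ))
    (hk' : k' * (g : ℤ) = (m : ℤ) * (l : ℤ) - (k : ℤ))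
    (p' q' : ℤ)
    (hp' : ∃ t : ℤ, (p' : ℚ) * k - (k : ℚ) * α₂ + (l : ℚ) * α₃ = (l : ℚ) * (t : ℚ))
    (hq' : ∃ t : ℤ, (q' : ℚ) * k - (k : ℚ) * β₂ + (l : ℚ) * β₃ = (l : ℚ) * (t : ℚ))
    (α₂' β₂' : ℚ)
    (hα₂' : α₂' = ((g : ℚ) / (l : ℚ)) * (α₂ - (p' : ℚ)))
    (hβ₂' : β₂' = ((g : ℚ) / (l : ℚ)) * (β₂ - (q' : ℚ))) :
    ((∃ t : ℤ, (m' : ℚ) * α₂' = (t : ℚ)) ∧ (∃ t : ℤ, (m' : ℚ) * β₂' = (t : ℚ))) ∧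
    ((1 : ℚ) - (k : ℚ) / ((m : ℚ) * (l : ℚ)) = (k' : ℚ) / (m' : ℚ) ∧ Int.gcd k' m' = 1) ∧
    ((∃ t : ℤ, (k' : ℚ) * α₂' + α₃ = (t : ℚ)) ∧ (∃ t : ℤ, (k' : ℚ) * β₂' + β₃ = (t : ℚ))) := by

  obtain ⟨tmα, htmα⟩ := hmα₂
  obtain ⟨tmβ, htmβ⟩ := hmβ₂
  obtain ⟨tα, htα⟩ := hp'
  obtain ⟨tβ, htβ⟩ := hq'
  have hg0 : 0 < g := by
    rw [hg]; exact Nat.gcd_pos_of_pos_left _ hk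
  have hgQ : (g : ℚ) ≠ 0 := by positivity
  have hlQ : (l : ℚ) ≠ 0 := by positivity
  have hmQ : (m : ℚ) ≠ 0 := by positivity
  have hqm : (m' : ℚ) * (g : ℚ) = (m : ℚ) * (l : ℚ) := by exact_mod_cast hm'
  have hqk : (k' : ℚ) * (g : ℚ) = (m : ℚ) * (l : ℚ) - (k : ℚ) := by exact_mod_cast hk'
  have hm'Q : (m' : ℚ) ≠ 0 := by
    intro h
    rw [h, zero_mul] at hqm
    exact hmQ (by rcases mul_eq_zero.mp hqm.symm with h | h; exact h; exact absurd h hlQ)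
  -- the gcd part
  have hgk : g ∣ k := hg ▸ Nat.gcd_dvd_left k l
  have hgl : g ∣ l := hg ▸ Nat.gcd_dvd_right k l
  have hkey : m' = (m : ℤ) * (l / g : ℕ) ∧ k' = (m : ℤ) * (l / g : ℕ) - (k / g : ℕ) := by
    have hgZ : (g : ℤ) ≠ 0 := by exact_mod_cast hg0.ne'
    have hl2 : ((l / g : ℕ) : ℤ) * g = l := by exact_mod_cast Nat.div_mul_cancel hgl
    have hk2 : ((k / g : ℕ) : ℤ) * g = k := by exact_mod_cast Nat.div_mul_cancel hgk
    constructor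
    · apply mul_right_cancel₀ hgZ
      rw [hm']
      linear_combination (-(m : ℤ)) * hl2
    · apply mul_right_cancel₀ hgZ
      rw [hk']
      linear_combination (-(m : ℤ)) * hl2 + hk2
  have hcop : IsCoprime k' m' := by
    obtain ⟨hm'eq, hk'eq⟩ := hkey
    have c1 : Nat.Coprime (k / g) m := by
      exact Nat.Coprime.coprime_dvd_left (Nat.div_dvd_of_dvd hgk) (Nat.coprime_comm.mp hmk)
    have c2 : Nat.Coprime (k / g) (l / g) := by
      rw [hg]; exact Nat.coprime_div_gcd_div_gcd (hg ▸ hg0)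
    have c3 : IsCoprime ((k / g : ℕ) : ℤ) ((m : ℤ) * (l / g : ℕ)) := by
      apply IsCoprime.mul_right
      · exact Int.isCoprime_iff_gcd_eq_one.mpr (by exact_mod_cast c1)
      · exact Int.isCoprime_iff_gcd_eq_one.mpr (by exact_mod_cast c2)
    rw [hm'eq, hk'eq]
    have := ((c3.symm.neg_right).add_mul_left_right 1).symm
    simpa [sub_eq_add_neg, mul_one, add_comm] using this
  refine ⟨⟨⟨tmα - m * p', ?_⟩, ⟨tmβ - m * q', ?_⟩⟩,
    ⟨?_, Int.isCoprime_iff_gcd_eq_one.mp hcop⟩,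
    ⟨⟨tmα - m * p' + tα, ?_⟩, ⟨tmβ - m * q' + tβ, ?_⟩⟩⟩
  · rw [hα₂']
    push_cast
    field_simp
    linear_combination (α₂ - (p' : ℚ)) * hqm + (l : ℚ) * htmα
  · rw [hβ₂']
    push_cast
    field_simp
    linear_combination (β₂ - (q' : ℚ)) * hqm + (l : ℚ) * htmβ
  · field_simp
    linear_combination (k' : ℚ) * hqm - (m' : ℚ) * hqk
  · rw [hα₂']
    push_cast
    field_simp
    linear_combination (α₂ - (p' : ℚ)) * hqk + (l : ℚ) * htmα + htα
  · rw [hβ₂']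
    push_cast
    field_simp
    linear_combination (β₂ - (q' : ℚ)) * hqk + (l : ℚ) * htmβ + htβ
end

section
/- For Berglund–Hübsch data (A, q, G), the identity Ell(W/G, z, τ + 1) = Ell(W/G, z, τ) holds at every (z, τ) ∈ ℂ × H with τ + 1 ∈ H at which all theta-function denominators appearing on both sides are nonzero. -/
/-- The Jacobi theta function
`Θ(ν, τ) = i q^{1/8} e^{−iπν}(1 − e^{2πiν}) ∏_{n≥1} (1 − q^n)(1 − q^n e^{2πiν})(1 − q^n e^{−2πiν})`
with `q = e^{2πiτ}` and `q^{1/8} = e^{iπτ/4}`. -/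
noncomputable def Theta (ν τ : ℂ) : ℂ :=
  Complex.I * Complex.exp (Real.pi * Complex.I * τ / 4) *
    Complex.exp (-(Real.pi * Complex.I * ν)) *
    (1 - Complex.exp (2 * Real.pi * Complex.I * ν)) *
    ∏' n : ℕ,
      ((1 - Complex.exp (2 * Real.pi * Complex.I * τ) ^ (n + 1)) *
        (1 - Complex.exp (2 * Real.pi * Complex.I * τ) ^ (n + 1) *
          Complex.exp (2 * Real.pi * Complex.I * ν)) *
        (1 - Complex.exp (2 * Real.pi * Complex.I * τ) ^ (n + 1) *
          Complex.exp (-(2 * Real.pi * Complex.I * ν))))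

/-- The Berglund–Hübsch elliptic genus
`Ell(W/G, z, τ) = (1/|G|) Σ_{n,n₁∈G} Π_j e^{−2πizθ_j(n)} ·
Θ((1−q_j)z − θ_j(n)τ − θ_j(n₁), τ) / Θ(q_j z + θ_j(n)τ + θ_j(n₁), τ)`,
where the group `G ⊆ ℚ^d/ℤ^d` is encoded by the finite set of its canonical
representatives with components in `[0,1)`, so that `θ_j(n) = n j`. -/
noncomputable def Ell (d : ℕ) (q : Fin d → ℚ) (G : Finset (Fin d → ℚ)) (z τ : ℂ) : ℂ :=
  (G.card : ℂ)⁻¹ *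
    ∑ n ∈ G, ∑ n₁ ∈ G, ∏ j : Fin d,
      Complex.exp (-(2 * Real.pi * Complex.I * z * (n j : ℂ))) *
        Theta ((1 - (q j : ℂ)) * z - (n j : ℂ) * τ - (n₁ j : ℂ)) τ /
        Theta ((q j : ℂ) * z + (n j : ℂ) * τ + (n₁ j : ℂ)) τ

/-- All theta-function denominators in the defining formula of `Ell` are
nonzero at `(z, τ)`. -/
def EllDenomNE (d : ℕ) (q : Fin d → ℚ) (G : Finset (Fin d → ℚ)) (z τ : ℂ) : Prop :=
  ∀ n ∈ G, ∀ n₁ ∈ G, ∀ j : Fin d,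
    Theta ((q j : ℂ) * z + (n j : ℂ) * τ + (n₁ j : ℂ)) τ ≠ 0

lemma fract_fract_add (x y : ℚ) : Int.fract (Int.fract x + Int.fract y) = Int.fract (x + y) := by
  have h : Int.fract x + Int.fract y = (x + y) + ((-⌊x⌋ - ⌊y⌋ : ℤ) : ℚ) := by
    simp only [Int.fract]; push_cast; ring
  rw [h, Int.fract_add_intCast]

lemma Theta_tau_add_one (ν τ : ℂ) :
    Theta ν (τ + 1) = Complex.exp (Real.pi * Complex.I / 4) * Theta ν τ := by
  unfold Theta
  have h1 : Complex.exp (2 * Real.pi * Complex.I * (τ + 1)) =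
      Complex.exp (2 * Real.pi * Complex.I * τ) := by
    rw [mul_add, Complex.exp_add, mul_one, Complex.exp_two_pi_mul_I, mul_one]
  have h2 : Complex.exp (Real.pi * Complex.I * (τ + 1) / 4) =
      Complex.exp (Real.pi * Complex.I / 4) * Complex.exp (Real.pi * Complex.I * τ / 4) := by
    rw [← Complex.exp_add]; ring_nf
  rw [h1, h2]; ring

lemma Theta_add_int (ν τ : ℂ) (m : ℤ) :
    Theta (ν + m) τ = (-1 : ℂ) ^ m * Theta ν τ := by
  unfold Theta
  have e1 : Complex.exp (-(Real.pi * Complex.I * (ν + m))) =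
      (-1 : ℂ) ^ m * Complex.exp (-(Real.pi * Complex.I * ν)) := by
    have h : -(Real.pi * Complex.I * (ν + m)) =
        -(Real.pi * Complex.I * ν) + m * (-(Real.pi * Complex.I)) := by ring
    have hexp : Complex.exp (-(Real.pi * Complex.I)) = -1 := by
      rw [Complex.exp_neg, Complex.exp_pi_mul_I]; norm_num
    rw [h, Complex.exp_add, Complex.exp_int_mul, hexp, mul_comm]
  have e2 : Complex.exp (2 * Real.pi * Complex.I * (ν + m)) =
      Complex.exp (2 * Real.pi * Complex.I * ν) := by
    have h : 2 * (Real.pi : ℂ) * Complex.I * (ν + m) =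
        2 * Real.pi * Complex.I * ν + m * (2 * Real.pi * Complex.I) := by ring
    rw [h, Complex.exp_add, Complex.exp_int_mul, Complex.exp_two_pi_mul_I, one_zpow, mul_one]
  have e3 : Complex.exp (-(2 * Real.pi * Complex.I * (ν + m))) =
      Complex.exp (-(2 * Real.pi * Complex.I * ν)) := by
    rw [Complex.exp_neg, Complex.exp_neg, e2]
  rw [e1, e2, e3]; ring

lemma neg_one_zpow_neg' (m : ℤ) : (-1 : ℂ) ^ (-m) = (-1 : ℂ) ^ m := by
  rw [zpow_neg]
  refine inv_eq_of_mul_eq_one_left ?_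
  rw [← mul_zpow]; norm_num

set_option maxHeartbeats 1000000 in
theorem Ell_tau_add_one'
    (d : ℕ)
    (q : Fin d → ℚ)
    (G : Finset (Fin d → ℚ))
    (hGrep : ∀ p ∈ G, ∀ j, 0 ≤ p j ∧ p j < 1)
    (hGadd : ∀ p ∈ G, ∀ p' ∈ G, (fun j => Int.fract (p j + p' j)) ∈ G)
    (hGneg : ∀ p ∈ G, (fun j => Int.fract (-(p j))) ∈ G)
    (z τ : ℂ) :
    Ell d q G z (τ + 1) = Ell d q G z τ := by
  have hfe : ∀ p ∈ G, ∀ j, Int.fract (p j) = p j := fun p hp j =>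
    Int.fract_eq_self.2 (hGrep p hp j)
  unfold Ell
  congr 1
  refine Finset.sum_congr rfl (fun n hn => ?_)
  refine Finset.sum_nbij' (i := fun a j => Int.fract (n j + a j))
    (j := fun a j => Int.fract (Int.fract (-(n j)) + a j))
    (fun a ha => hGadd n hn a ha)
    (fun a ha => by
      have := hGadd _ (hGneg n hn) a ha
      simpa using this)
    (fun a ha => by
      funext k
      have h1 : Int.fract (Int.fract (-(n k)) + Int.fract (n k + a k))
          = Int.fract (-(n k) + (n k + a k)) := fract_fract_add _ _
      simp only [h1]
      rw [show -(n k) + (n k + a k) = a k by ring, hfe a ha])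
    (fun a ha => by
      funext k
      have h2 : Int.fract (Int.fract (-(n k)) + a k)
          = Int.fract (-(n k) + a k) := by
        conv_lhs => rw [← hfe a ha k]
        exact fract_fract_add _ _
      calc Int.fract (n k + Int.fract (Int.fract (-(n k)) + a k))
          = Int.fract (n k + Int.fract (-(n k) + a k)) := by rw [h2]
        _ = Int.fract (Int.fract (n k) + Int.fract (-(n k) + a k)) := by rw [hfe n hn k]
        _ = Int.fract (n k + (-(n k) + a k)) := by rw [fract_fract_add]
        _ = a k := by rw [show n k + (-(n k) + a k) = a k by ring, hfe a ha])
    (fun a ha => ?_)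
  refine Finset.prod_congr rfl (fun j _ => ?_)
  set m : ℤ := ⌊n j + a j⌋ with hm
  have hf : ((Int.fract (n j + a j) : ℚ) : ℂ) = (n j : ℂ) + (a j : ℂ) - (m : ℂ) := by
    simp only [Int.fract, hm]; push_cast; ring
  have hnum : (1 - (q j : ℂ)) * z - (n j : ℂ) * (τ + 1) - (a j : ℂ)
      = ((1 - (q j : ℂ)) * z - (n j : ℂ) * τ - ((Int.fract (n j + a j) : ℚ) : ℂ)) + ((-m : ℤ) : ℂ) := by
    rw [hf]; push_cast; ring
  have hden : (q j : ℂ) * z + (n j : ℂ) * (τ + 1) + (a j : ℂ)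
      = ((q j : ℂ) * z + (n j : ℂ) * τ + ((Int.fract (n j + a j) : ℚ) : ℂ)) + ((m : ℤ) : ℂ) := by
    rw [hf]; push_cast; ring
  rw [hnum, hden, Theta_add_int, Theta_add_int, Theta_tau_add_one, Theta_tau_add_one,
    neg_one_zpow_neg']
  set e := Complex.exp (Real.pi * Complex.I / 4)
  set E := Complex.exp (-(2 * Real.pi * Complex.I * z * (n j : ℂ)))
  set N := Theta ((1 - (q j : ℂ)) * z - (n j : ℂ) * τ - ((Int.fract (n j + a j) : ℚ) : ℂ)) τ
  set D := Theta ((q j : ℂ) * z + (n j : ℂ) * τ + ((Int.fract (n j + a j) : ℚ) : ℂ)) τ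
  have hc : ((-1 : ℂ) ^ m * e) ≠ 0 :=
    mul_ne_zero (zpow_ne_zero _ (by norm_num)) (Complex.exp_ne_zero _)
  rw [show (-1 : ℂ) ^ m * (e * N) = ((-1 : ℂ) ^ m * e) * N by ring,
    show (-1 : ℂ) ^ m * (e * D) = ((-1 : ℂ) ^ m * e) * D by ring,
    mul_div_assoc, mul_div_mul_left _ _ hc, ← mul_div_assoc]

/-- `Ell(W/G, z, τ + 1) = Ell(W/G, z, τ)`. -/
theorem Ell_tau_add_one
    (d : ℕ) (hd : 1 ≤ d)
    (A : Matrix (Fin d) (Fin d) ℕ)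
    (hA : (A.map (fun a => (a : ℚ))).det ≠ 0)
    (q : Fin d → ℚ)
    (hq : (A.map (fun a => (a : ℚ))).mulVec q = fun _ => 1)
    (hqpos : ∀ j, 0 < q j)
    (G : Finset (Fin d → ℚ))
    (hGrep : ∀ p ∈ G, ∀ j, 0 ≤ p j ∧ p j < 1)
    (hGaut : ∀ p ∈ G, ∀ i, ∃ t : ℤ, ∑ j, (A i j : ℚ) * p j = (t : ℚ))
    (hGzero : (fun _ => 0 : Fin d → ℚ) ∈ G)
    (hGadd : ∀ p ∈ G, ∀ p' ∈ G, (fun j => Int.fract (p j + p' j)) ∈ G)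
    (hGneg : ∀ p ∈ G, (fun j => Int.fract (-(p j))) ∈ G)
    (hJW : (fun j => Int.fract (q j)) ∈ G)
    (hGsum : ∀ p ∈ G, ∃ t : ℤ, ∑ j, p j = (t : ℚ))
    (z τ : ℂ) (hτ : 0 < τ.im) (hτ1 : 0 < (τ + 1).im)
    (hden : EllDenomNE d q G z τ) (hden' : EllDenomNE d q G z (τ + 1)) :
    Ell d q G z (τ + 1) = Ell d q G z τ :=
  Ell_tau_add_one' d q G hGrep hGadd hGneg z τ
end

section
/- For Berglund–Hübsch data (A, q, G), with ĉ = d − 2Σ_j q_j ∈ ℤ, the identity Ell(W/G, z + τ, τ) = (−1)^{ĉ} e^{−iπĉ(τ + 2z)} Ell(W/G, z, τ) holds at every (z, τ) ∈ ℂ × H at which all theta-function denominators appearing on both sides are nonzero. -/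
/-! Under `z ↦ z + τ` every theta quotient in the summand of `Ell` picks up the factor coming from
`Θ(ν + mτ) = (-1)^m e^{-πi(m²τ + 2mν)} Θ(ν)`: the summand indexed by `(n, n₁)` becomes the summand
indexed by `(n + J_W, n₁)` times `∏_j (-e^{-πi(1 - 2q_j)(τ + 2z)} e^{2πiθ_j(n₁)})`, and this product
is `(-1)^ĉ e^{-πiĉ(τ + 2z)}` because `Σ_j q_j` and `Σ_j θ_j(n₁)` are integers. Translation by
`J_W ∈ G` permutes `G`, so summing over `n` gives the identity. -/

open Complex
open scoped Real

lemma multipliable_one_sub_pow_succ_mul {Q : ℂ} (hQ : ‖Q‖ < 1) (a : ℂ) :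
    Multipliable fun n : ℕ => 1 - Q ^ (n + 1) * a := by
  have hsum : Summable fun n : ℕ => ‖-(Q ^ (n + 1) * a)‖ := by
    simpa [norm_mul, norm_pow] using
      ((summable_nat_add_iff 1).mpr (summable_geometric_of_lt_one (norm_nonneg _) hQ)).mul_right ‖a‖
  simpa [sub_eq_add_neg] using multipliable_one_add_of_summable hsum

lemma tprod_one_sub_pow_succ_mul {Q : ℂ} (hQ : ‖Q‖ < 1) (a : ℂ) :
    ∏' n : ℕ, (1 - Q ^ (n + 1) * a) = (1 - Q * a) * ∏' n : ℕ, (1 - Q ^ (n + 1) * (Q * a)) := by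
  rw [tprod_eq_zero_mul' ((multipliable_one_sub_pow_succ_mul hQ (Q * a)).congr fun n => by ring)]
  simp only [zero_add, pow_one]
  exact congrArg _ (tprod_congr fun n => by ring)

lemma Theta_eq_mul_tprod {τ : ℂ} (hτ : 0 < τ.im) (ν : ℂ) :
    Theta ν τ = I * cexp (π * I * τ / 4) * cexp (-(π * I * ν)) * (1 - cexp (2 * π * I * ν)) *
      ((∏' n : ℕ, (1 - cexp (2 * π * I * τ) ^ (n + 1))) *
        (∏' n : ℕ, (1 - cexp (2 * π * I * τ) ^ (n + 1) * cexp (2 * π * I * ν))) *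
        ∏' n : ℕ, (1 - cexp (2 * π * I * τ) ^ (n + 1) * (cexp (2 * π * I * ν))⁻¹)) := by
  have hQ : ‖cexp (2 * π * I * τ)‖ < 1 := UpperHalfPlane.norm_exp_two_pi_I_lt_one ⟨τ, hτ⟩
  rw [Theta, ← Multipliable.tprod_mul (ModularForm.multipliable_one_sub_pow hQ)
      (multipliable_one_sub_pow_succ_mul hQ _),
    ← Multipliable.tprod_mul ((ModularForm.multipliable_one_sub_pow hQ).mul
      (multipliable_one_sub_pow_succ_mul hQ _)) (multipliable_one_sub_pow_succ_mul hQ _)]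
  simp only [exp_neg]

lemma Theta_add_tau {τ : ℂ} (hτ : 0 < τ.im) (ν : ℂ) :
    Theta (ν + τ) τ = -cexp (-(π * I * τ) - 2 * π * I * ν) * Theta ν τ := by
  have hQ : ‖cexp (2 * π * I * τ)‖ < 1 := UpperHalfPlane.norm_exp_two_pi_I_lt_one ⟨τ, hτ⟩
  rw [Theta_eq_mul_tprod hτ, Theta_eq_mul_tprod hτ, mul_add (2 * π * I), exp_add,
    show -(π * I * (ν + τ)) = -(π * I * ν) + -(π * I * τ) by ring, exp_add, exp_sub]
  set Q := cexp (2 * π * I * τ)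
  set y := cexp (2 * π * I * ν)
  have hQ0 : Q ≠ 0 := exp_ne_zero _
  have hy0 : y ≠ 0 := exp_ne_zero _
  -- `y ↦ yQ` moves the factor `1 - Qy` out of the `y`-product and `1 - y⁻¹` into the `y⁻¹`-product.
  have hC := tprod_one_sub_pow_succ_mul hQ (y * Q)⁻¹
  rw [show Q * (y * Q)⁻¹ = y⁻¹ by field_simp] at hC
  rw [tprod_one_sub_pow_succ_mul hQ y, hC, mul_comm Q y]
  generalize ∏' n : ℕ, (1 - Q ^ (n + 1)) = A
  generalize ∏' n : ℕ, (1 - Q ^ (n + 1) * (y * Q)) = B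
  generalize ∏' n : ℕ, (1 - Q ^ (n + 1) * y⁻¹) = C
  field_simp
  ring

lemma Theta_sub_tau {τ : ℂ} (hτ : 0 < τ.im) (ν : ℂ) :
    Theta (ν - τ) τ = -cexp (-(π * I * τ) + 2 * π * I * ν) * Theta ν τ := by
  have h := Theta_add_tau hτ (ν - τ)
  rw [sub_add_cancel] at h
  rw [h, ← mul_assoc, neg_mul_neg, ← exp_add,
    show -(π * I * τ) + 2 * π * I * ν + (-(π * I * τ) - 2 * π * I * (ν - τ)) = 0 by ring,
    exp_zero, one_mul]

lemma Theta_add_intCast_mul_tau {τ : ℂ} (hτ : 0 < τ.im) (ν : ℂ) (m : ℤ) :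
    Theta (ν + m * τ) τ = (-1) ^ m * cexp (-(π * I * m * (m * τ + 2 * ν))) * Theta ν τ := by
  induction m using Int.induction_on with
  | zero => simp
  | succ i ih =>
    have hexp : cexp (-(π * I * τ) - 2 * π * I * (ν + (i : ℤ) * τ)) *
        cexp (-(π * I * (i : ℤ) * ((i : ℤ) * τ + 2 * ν))) =
        cexp (-(π * I * (i + 1 : ℤ) * ((i + 1 : ℤ) * τ + 2 * ν))) := by
      rw [← exp_add]; congr 1; push_cast; ring
    rw [show ν + ((i + 1 : ℤ) : ℂ) * τ = ν + (i : ℤ) * τ + τ by push_cast; ring,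
      Theta_add_tau hτ, ih, zpow_add_one₀ (by norm_num), ← hexp]
    ring
  | pred i ih =>
    have hexp : cexp (-(π * I * τ) + 2 * π * I * (ν + (-i : ℤ) * τ)) *
        cexp (-(π * I * (-i : ℤ) * ((-i : ℤ) * τ + 2 * ν))) =
        cexp (-(π * I * (-i - 1 : ℤ) * ((-i - 1 : ℤ) * τ + 2 * ν))) := by
      rw [← exp_add]; congr 1; push_cast; ring
    rw [show ν + ((-i - 1 : ℤ) : ℂ) * τ = ν + (-i : ℤ) * τ - τ by push_cast; ring,
      Theta_sub_tau hτ, ih, zpow_sub_one₀ (by norm_num), ← hexp]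
    ring

lemma neg_one_zpow_one_sub {α : Type*} [DivisionRing α] (k : ℤ) :
    (-1 : α) ^ (1 - k) = -(-1) ^ k := by
  rw [zpow_sub₀ (by norm_num), zpow_one]
  rcases Int.even_or_odd k with hk | hk <;> simp [hk.neg_one_zpow]

lemma neg_one_zpow_eq_pow_of_eq_sub_two_mul {α : Type*} [DivisionRing α] {c s : ℤ} {n : ℕ}
    (h : c = n - 2 * s) : (-1 : α) ^ c = (-1) ^ n := by
  rw [h, zpow_sub₀ (by norm_num), zpow_natCast, zpow_mul]
  simp

lemma Int.fract_add_fract_right {R : Type*} [Ring R] [LinearOrder R] [IsStrictOrderedRing R]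
    [FloorRing R] (a b : R) : Int.fract (a + Int.fract b) = Int.fract (a + b) :=
  Int.fract_eq_fract.2 ⟨-⌊b⌋, by rw [Int.fract]; push_cast; abel⟩

lemma exists_sum_eq_intCast_of_sum_fract {ι R : Type*} [Ring R] [LinearOrder R]
    [IsStrictOrderedRing R] [FloorRing R] {s : Finset ι} {f : ι → R}
    (h : ∃ t : ℤ, ∑ j ∈ s, Int.fract (f j) = t) : ∃ t : ℤ, ∑ j ∈ s, f j = t := by
  obtain ⟨t, ht⟩ := h
  refine ⟨t + ∑ j ∈ s, ⌊f j⌋, ?_⟩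
  push_cast
  rw [← ht, ← Finset.sum_add_distrib]
  exact Finset.sum_congr rfl fun j _ => (Int.fract_add_floor _).symm

lemma Finset.sum_comp_fract_add {ι R M : Type*} [Ring R] [LinearOrder R] [IsStrictOrderedRing R]
    [FloorRing R] [AddCommMonoid M] {G : Finset (ι → R)} (v : ι → R)
    (hG : ∀ p ∈ G, ∀ j, 0 ≤ p j ∧ p j < 1)
    (hv : ∀ p ∈ G, (fun j => Int.fract (p j + v j)) ∈ G) (f : (ι → R) → M) :
    ∑ p ∈ G, f (fun j => Int.fract (p j + v j)) = ∑ p ∈ G, f p := by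
  classical
  have hinj : Set.InjOn (fun (p : ι → R) j => Int.fract (p j + v j)) G := by
    intro p hp p' hp' h
    funext j
    obtain ⟨m, hm⟩ := Int.fract_eq_fract.1 (congrFun h j)
    rw [← Int.fract_eq_self.2 (hG p hp j), ← Int.fract_eq_self.2 (hG p' hp' j)]
    exact Int.fract_eq_fract.2 ⟨m, by rw [← hm]; abel⟩
  have himage : G.image (fun (p : ι → R) j => Int.fract (p j + v j)) = G :=
    Finset.eq_of_subset_of_card_le (Finset.image_subset_iff.2 hv)
      (Finset.card_image_of_injOn hinj).ge
  rw [← Finset.sum_image hinj, himage]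

/-- The `j`-th factor of the summand of `Ell`, with `a = q_j`, `b = θ_j(n)`, `e = θ_j(n₁)`. -/
noncomputable def ellFactor (a b e z τ : ℂ) : ℂ :=
  cexp (-(2 * π * I * z * b)) * Theta ((1 - a) * z - b * τ - e) τ / Theta (a * z + b * τ + e) τ

lemma Ell_eq_sum_sum_prod_ellFactor (d : ℕ) (q : Fin d → ℚ) (G : Finset (Fin d → ℚ)) (z τ : ℂ) :
    Ell d q G z τ =
      (G.card : ℂ)⁻¹ * ∑ n ∈ G, ∑ n₁ ∈ G, ∏ j, ellFactor (q j) (n j) (n₁ j) z τ :=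
  rfl

lemma ellFactor_add_tau {τ : ℂ} (hτ : 0 < τ.im) (a b b' e z : ℂ) (k : ℤ) (hk : b + a = b' + k) :
    ellFactor a b e (z + τ) τ =
      -cexp (-(π * I * (1 - 2 * a) * (τ + 2 * z))) * cexp (2 * π * I * e) *
        ellFactor a b' e z τ := by
  have hb : b = b' + k - a := by rw [← hk]; ring
  rw [ellFactor, ellFactor,
    show (1 - a) * (z + τ) - b * τ - e = (1 - a) * z - b' * τ - e + ((1 - k : ℤ) : ℂ) * τ by
      push_cast; rw [hb]; ring,
    show a * (z + τ) + b * τ + e = a * z + b' * τ + e + (k : ℂ) * τ by rw [hb]; ring,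
    Theta_add_intCast_mul_tau hτ, Theta_add_intCast_mul_tau hτ, neg_one_zpow_one_sub]
  have hexp : cexp (-(2 * π * I * (z + τ) * b)) *
      cexp (-(π * I * (1 - k : ℤ) * ((1 - k : ℤ) * τ + 2 * ((1 - a) * z - b' * τ - e)))) =
      cexp (-(π * I * (1 - 2 * a) * (τ + 2 * z))) * cexp (2 * π * I * e) *
        cexp (-(2 * π * I * z * b')) * cexp (-(π * I * k * (k * τ + 2 * (a * z + b' * τ + e)))) := by
    simp only [← exp_add]; congr 1; push_cast; rw [hb]; ring
  have hsign : (-1 : ℂ) ^ k ≠ 0 := zpow_ne_zero _ (by norm_num)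
  have hE : cexp (-(π * I * k * (k * τ + 2 * (a * z + b' * τ + e)))) ≠ 0 := exp_ne_zero _
  generalize Theta ((1 - a) * z - b' * τ - e) τ = Θ₁
  generalize Theta (a * z + b' * τ + e) τ = Θ₂
  calc _ = (cexp (-(2 * π * I * (z + τ) * b)) *
      cexp (-(π * I * (1 - k : ℤ) * ((1 - k : ℤ) * τ + 2 * ((1 - a) * z - b' * τ - e))))) *
      (-(-1) ^ k / ((-1) ^ k * cexp (-(π * I * k * (k * τ + 2 * (a * z + b' * τ + e)))))) *
      (Θ₁ / Θ₂) := by ring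
    _ = _ := by rw [hexp]; field_simp

lemma prod_ellFactor_add_tau {ι : Type*} [Fintype ι] {τ : ℂ} (hτ : 0 < τ.im)
    (a b b' e : ι → ℂ) (z : ℂ) (k : ι → ℤ) (hk : ∀ j, b j + a j = b' j + k j) :
    ∏ j, ellFactor (a j) (b j) (e j) (z + τ) τ =
      (-1) ^ Fintype.card ι * cexp (-(π * I * (Fintype.card ι - 2 * ∑ j, a j) * (τ + 2 * z))) *
        cexp (2 * π * I * ∑ j, e j) * ∏ j, ellFactor (a j) (b' j) (e j) z τ := by
  rw [Finset.prod_congr rfl fun j _ => ellFactor_add_tau hτ (a j) (b j) (b' j) (e j) z (k j) (hk j),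
    Finset.prod_mul_distrib, Finset.prod_mul_distrib, Finset.prod_neg, ← exp_sum, ← exp_sum,
    Finset.card_univ, ← Finset.mul_sum]
  congr 4
  simp only [Finset.sum_neg_distrib, ← Finset.sum_mul, ← Finset.mul_sum, Finset.sum_sub_distrib,
    Finset.sum_const, Finset.card_univ, nsmul_eq_mul, mul_one]

lemma prod_ellFactor_add_tau_eq_fract {ι : Type*} [Fintype ι] {τ : ℂ} (hτ : 0 < τ.im)
    (a b e : ι → ℚ) (z : ℂ) {c : ℤ} (hc : (c : ℚ) = Fintype.card ι - 2 * ∑ j, a j)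
    (ha : ∃ s : ℤ, ∑ j, a j = s) (he : ∃ t : ℤ, ∑ j, e j = t) :
    ∏ j, ellFactor (a j) (b j) (e j) (z + τ) τ =
      (-1) ^ c * cexp (-(π * I * c * (τ + 2 * z))) *
        ∏ j, ellFactor (a j) (Int.fract (b j + a j) : ℚ) (e j) z τ := by
  obtain ⟨s, hs⟩ := ha
  obtain ⟨t, ht⟩ := he
  have hcs : c = Fintype.card ι - 2 * s := by exact_mod_cast hs ▸ hc
  have hcC : (c : ℂ) = Fintype.card ι - 2 * ∑ j, (a j : ℂ) := by exact_mod_cast hc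
  rw [prod_ellFactor_add_tau hτ (fun j => (a j : ℂ)) (fun j => (b j : ℂ))
      (fun j => (Int.fract (b j + a j) : ℚ)) (fun j => (e j : ℂ)) z (fun j => ⌊b j + a j⌋)
      (fun j => by exact_mod_cast (Int.fract_add_floor (b j + a j)).symm),
    ← neg_one_zpow_eq_pow_of_eq_sub_two_mul hcs, ← hcC,
    show ∑ j, (e j : ℂ) = t by exact_mod_cast ht, mul_comm _ (t : ℂ),
    exp_int_mul_two_pi_mul_I, mul_one]

theorem Ell_z_add_tau_general
    (d : ℕ)
    (q : Fin d → ℚ)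
    (G : Finset (Fin d → ℚ))
    (hGrep : ∀ p ∈ G, ∀ j, 0 ≤ p j ∧ p j < 1)
    (hGadd : ∀ p ∈ G, ∀ p' ∈ G, (fun j => Int.fract (p j + p' j)) ∈ G)
    (hJW : (fun j => Int.fract (q j)) ∈ G)
    (hGsum : ∀ p ∈ G, ∃ t : ℤ, ∑ j, p j = (t : ℚ))
    (c : ℤ) (hc : (c : ℚ) = (d : ℚ) - 2 * ∑ j, q j)
    (z τ : ℂ) (hτ : 0 < τ.im) :
    Ell d q G (z + τ) τ =
      (-1 : ℂ) ^ c * Complex.exp (-(Real.pi * Complex.I * (c : ℂ) * (τ + 2 * z))) *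
        Ell d q G z τ := by
  have hshift : ∀ p ∈ G, (fun j => Int.fract (p j + q j)) ∈ G := fun p hp => by
    simpa only [Int.fract_add_fract_right] using hGadd p hp _ hJW
  have hcard : (c : ℚ) = Fintype.card (Fin d) - 2 * ∑ j, q j := by rwa [Fintype.card_fin]
  have hqsum := exists_sum_eq_intCast_of_sum_fract (hGsum _ hJW)
  calc Ell d q G (z + τ) τ = (G.card : ℂ)⁻¹ * ∑ n ∈ G, ∑ n₁ ∈ G,
        (-1) ^ c * cexp (-(π * I * c * (τ + 2 * z))) *
          ∏ j, ellFactor (q j) (Int.fract (n j + q j) : ℚ) (n₁ j) z τ := by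
        rw [Ell_eq_sum_sum_prod_ellFactor]
        exact congrArg _ (Finset.sum_congr rfl fun n _ => Finset.sum_congr rfl fun n₁ hn₁ =>
          prod_ellFactor_add_tau_eq_fract hτ q n n₁ z hcard hqsum (hGsum n₁ hn₁))
    _ = (-1) ^ c * cexp (-(π * I * c * (τ + 2 * z))) * ((G.card : ℂ)⁻¹ * ∑ n ∈ G, ∑ n₁ ∈ G,
          ∏ j, ellFactor (q j) (Int.fract (n j + q j) : ℚ) (n₁ j) z τ) := by
        simp only [← Finset.mul_sum]
        ring
    _ = _ := by
        rw [Ell_eq_sum_sum_prod_ellFactor, Finset.sum_comp_fract_add q hGrep hshift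
          fun n => ∑ n₁ ∈ G, ∏ j, ellFactor (q j) (n j) (n₁ j) z τ]

/-- `Ell(W/G, z + τ, τ) = (−1)^ĉ e^{−iπĉ(τ + 2z)} Ell(W/G, z, τ)`,
where `ĉ = d − 2Σ_j q_j ∈ ℤ`. -/
theorem Ell_z_add_tau
    (d : ℕ) (hd : 1 ≤ d)
    (A : Matrix (Fin d) (Fin d) ℕ)
    (hA : (A.map (fun a => (a : ℚ))).det ≠ 0)
    (q : Fin d → ℚ)
    (hq : (A.map (fun a => (a : ℚ))).mulVec q = fun _ => 1)
    (hqpos : ∀ j, 0 < q j)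
    (G : Finset (Fin d → ℚ))
    (hGrep : ∀ p ∈ G, ∀ j, 0 ≤ p j ∧ p j < 1)
    (hGaut : ∀ p ∈ G, ∀ i, ∃ t : ℤ, ∑ j, (A i j : ℚ) * p j = (t : ℚ))
    (hGzero : (fun _ => 0 : Fin d → ℚ) ∈ G)
    (hGadd : ∀ p ∈ G, ∀ p' ∈ G, (fun j => Int.fract (p j + p' j)) ∈ G)
    (hGneg : ∀ p ∈ G, (fun j => Int.fract (-(p j))) ∈ G)
    (hJW : (fun j => Int.fract (q j)) ∈ G)
    (hGsum : ∀ p ∈ G, ∃ t : ℤ, ∑ j, p j = (t : ℚ))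
    (c : ℤ) (hc : (c : ℚ) = (d : ℚ) - 2 * ∑ j, q j)
    (z τ : ℂ) (hτ : 0 < τ.im)
    (hden : EllDenomNE d q G z τ) (hden' : EllDenomNE d q G (z + τ) τ) :
    Ell d q G (z + τ) τ =
      (-1 : ℂ) ^ c * Complex.exp (-(Real.pi * Complex.I * (c : ℂ) * (τ + 2 * z))) *
        Ell d q G z τ :=
  Ell_z_add_tau_general d q G hGrep hGadd hJW hGsum c hc z τ hτ
end

section
/- For Berglund–Hübsch data (A, q, G) and any fixed z ∈ ℂ such that q_j z + θ_j(n₁) ∉ ℤ for all 1 ≤ j ≤ d and all n₁ ∈ G, the limit lim_{t → +∞} Ell(W/G, z, it) exists in ℂ. (This is the statement that Ell has no negative powers of q at the cusp, i.e. that it is a WEAK Jacobi form.) -/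
/-! Each summand of `Ell` converges separately. With `x = e^{2πiν}` and `q = e^{2πiτ}`,
`Θ(z - ν, τ) / Θ(ν, τ) = e^{-πiz} (x - e^{2πiz}) / (1 - x)` times a quotient of two infinite
products that tends to `1` as soon as `q`, `qx` and `q/x` tend to `0`. Along `τ = it` with
`ν = q_j z + θ_j(n₁) + θ_j(n) it` and `0 ≤ θ_j(n) < 1`, the factor `q/x` decays like
`e^{-2π(1-θ_j(n))t}`, while `x` tends to `0` if `θ_j(n) > 0` and is the constant
`e^{2πi(q_j z + θ_j(n₁))} ≠ 1` if `θ_j(n) = 0`. -/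

open Filter Topology Real Complex

noncomputable def thetaProd (q x : ℂ) : ℂ :=
  ∏' n : ℕ, (1 - q ^ (n + 1)) * (1 - q ^ (n + 1) * x) * (1 - q ^ (n + 1) * x⁻¹)

lemma Theta_eq_thetaProd (ν τ : ℂ) :
    Theta ν τ = I * cexp (π * I * τ / 4) * cexp (-(π * I * ν)) * (1 - cexp (2 * π * I * ν)) *
      thetaProd (cexp (2 * π * I * τ)) (cexp (2 * π * I * ν)) := by
  simp only [Theta, thetaProd, Complex.exp_neg]

lemma norm_one_sub_mul_one_sub_mul_one_sub_sub_one_le {R : Type*} [NormedRing R] [NormOneClass R]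
    {u v w : R} {m : ℝ} (hm : m ≤ 1) (hu : ‖u‖ ≤ m) (hv : ‖v‖ ≤ m) (hw : ‖w‖ ≤ m) :
    ‖(1 - u) * (1 - v) * (1 - w) - 1‖ ≤ 7 * m := by
  have h1u : ‖1 - u‖ ≤ 2 := (norm_sub_le _ _).trans (by rw [norm_one]; linarith)
  have h1v : ‖1 - v‖ ≤ 2 := (norm_sub_le _ _).trans (by rw [norm_one]; linarith)
  have hm0 : 0 ≤ m := (norm_nonneg u).trans hu
  calc ‖(1 - u) * (1 - v) * (1 - w) - 1‖ = ‖-u - (1 - u) * v - (1 - u) * (1 - v) * w‖ := by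
        congr 1; noncomm_ring
    _ ≤ ‖u‖ + ‖1 - u‖ * ‖v‖ + ‖1 - u‖ * ‖1 - v‖ * ‖w‖ := by
        refine (norm_sub_le _ _).trans (add_le_add ((norm_sub_le _ _).trans ?_) ?_)
        · rw [norm_neg]; gcongr; exact norm_mul_le _ _
        · exact (norm_mul_le _ _).trans (by gcongr; exact norm_mul_le _ _)
    _ ≤ m + 2 * m + 2 * 2 * m := by gcongr
    _ = 7 * m := by ring

lemma norm_pow_succ_mul_le {R : Type*} [NormedRing R] [NormOneClass R] [NormMulClass R]
    {q y : R} (hq : ‖q‖ ≤ 1 / 2) (hqy : ‖q * y‖ ≤ 1 / 2) (n : ℕ) :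
    ‖q ^ (n + 1) * y‖ ≤ (1 / 2) ^ (n + 1) := by
  rw [pow_succ, mul_assoc, norm_mul, norm_pow, pow_succ]
  gcongr

lemma tendsto_thetaProd_one {α : Type*} {l : Filter α} {q x : α → ℂ} (hq : Tendsto q l (𝓝 0))
    (hqx : Tendsto (fun a => q a * x a) l (𝓝 0))
    (hqx' : Tendsto (fun a => q a * (x a)⁻¹) l (𝓝 0)) :
    Tendsto (fun a => thetaProd (q a) (x a)) l (𝓝 1) := by
  set f : α → ℕ → ℂ := fun a n => (1 - q a ^ (n + 1)) * (1 - q a ^ (n + 1) * x a) *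
    (1 - q a ^ (n + 1) * (x a)⁻¹) - 1
  have hpow {y : α → ℂ} (hy : Tendsto (fun a => q a * y a) l (𝓝 0)) (n : ℕ) :
      Tendsto (fun a => q a ^ (n + 1) * y a) l (𝓝 0) := by
    simpa [pow_succ, mul_assoc] using (hq.pow n).mul hy
  have hq1 : Tendsto (fun a => q a * 1) l (𝓝 0) := by simpa using hq
  have hf (n : ℕ) : Tendsto (f · n) l (𝓝 0) := by
    simpa [f] using (((hpow hq1 n).const_sub 1).mul ((hpow hqx n).const_sub 1)).mul
      ((hpow hqx' n).const_sub 1) |>.sub_const 1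
  have hsmall {y : α → ℂ} (hy : Tendsto y l (𝓝 0)) : ∀ᶠ a in l, ‖y a‖ ≤ 1 / 2 :=
    (by simpa using hy.norm : Tendsto (‖y ·‖) l (𝓝 0)).eventually_le_const (by norm_num)
  have hbound : ∀ᶠ a in l, ∀ n, ‖f a n‖ ≤ 7 * (1 / 2) ^ (n + 1) := by
    filter_upwards [hsmall hq, hsmall hqx, hsmall hqx'] with a h₁ h₂ h₃ n
    have h₁' : ‖q a * 1‖ ≤ 1 / 2 := by simpa using h₁
    simpa [f] using norm_one_sub_mul_one_sub_mul_one_sub_sub_one_le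
      (pow_le_one₀ (by norm_num) (by norm_num)) (norm_pow_succ_mul_le h₁ h₁' n)
      (norm_pow_succ_mul_le h₁ h₂ n) (norm_pow_succ_mul_le h₁ h₃ n)
  have hsum : Summable fun n : ℕ => 7 * (1 / 2 : ℝ) ^ (n + 1) :=
    ((summable_geometric_two).mul_left (1 / 2)).mul_left 7 |>.congr fun n => by ring
  simpa [thetaProd, f] using tendsto_tprod_one_add_of_dominated_convergence hsum hf hbound

lemma Theta_sub_div_Theta (z ν τ : ℂ) :
    Theta (z - ν) τ / Theta ν τ =
      cexp (-(π * I * z)) * (cexp (2 * π * I * ν) - cexp (2 * π * I * z)) /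
          (1 - cexp (2 * π * I * ν)) *
        (thetaProd (cexp (2 * π * I * τ)) (cexp (2 * π * I * z) / cexp (2 * π * I * ν)) /
          thetaProd (cexp (2 * π * I * τ)) (cexp (2 * π * I * ν))) := by
  have hhead : cexp (-(π * I * (z - ν))) * (1 - cexp (2 * π * I * (z - ν))) =
      cexp (-(π * I * ν)) *
        (cexp (-(π * I * z)) * (cexp (2 * π * I * ν) - cexp (2 * π * I * z))) := by
    simp only [mul_sub, mul_one, ← Complex.exp_add]
    congr 2 <;> ring
  rw [Theta_eq_thetaProd, Theta_eq_thetaProd, mul_assoc _ (cexp (-(π * I * (z - ν)))), hhead,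
    mul_sub (2 * π * I) z ν, Complex.exp_sub]
  simp only [mul_assoc]
  rw [mul_div_mul_left _ _ I_ne_zero, mul_div_mul_left _ _ (Complex.exp_ne_zero _),
    mul_div_mul_left _ _ (Complex.exp_ne_zero _), mul_div_mul_comm]
  ring

lemma tendsto_Theta_sub_div_Theta {α : Type*} {l : Filter α} (z : ℂ) {ν τ : α → ℂ} {x₀ : ℂ}
    (hx : Tendsto (fun a => cexp (2 * π * I * ν a)) l (𝓝 x₀)) (hx₀ : x₀ ≠ 1)
    (hq : Tendsto (fun a => cexp (2 * π * I * τ a)) l (𝓝 0))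
    (hqx : Tendsto (fun a => cexp (2 * π * I * τ a) / cexp (2 * π * I * ν a)) l (𝓝 0)) :
    Tendsto (fun a => Theta (z - ν a) (τ a) / Theta (ν a) (τ a)) l
      (𝓝 (cexp (-(π * I * z)) * (x₀ - cexp (2 * π * I * z)) / (1 - x₀))) := by
  set w := cexp (2 * π * I * z)
  have hw : w ≠ 0 := Complex.exp_ne_zero _
  have hhead : Tendsto (fun a => cexp (-(π * I * z)) * (cexp (2 * π * I * ν a) - w) /
      (1 - cexp (2 * π * I * ν a))) l (𝓝 (cexp (-(π * I * z)) * (x₀ - w) / (1 - x₀))) :=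
    ((hx.sub_const w).const_mul _).div (hx.const_sub 1) (sub_ne_zero.2 hx₀.symm)
  have hprod₁ := tendsto_thetaProd_one hq (x := fun a => w / cexp (2 * π * I * ν a))
    (by simpa [mul_div_left_comm] using hqx.const_mul w)
    (by simpa [mul_div_assoc'] using (hq.mul hx).div_const w)
  have hprod₂ := tendsto_thetaProd_one hq (x := fun a => cexp (2 * π * I * ν a))
    (by simpa using hq.mul hx) (by simpa [div_eq_mul_inv] using hqx)
  simpa [Theta_sub_div_Theta] using hhead.mul (hprod₁.div hprod₂ one_ne_zero)

lemma tendsto_cexp_two_pi_I_mul_add_mul_I_atTop (c : ℂ) {s : ℝ} (hs : 0 < s) :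
    Tendsto (fun t : ℝ => cexp (2 * π * I * (c + s * (t * I)))) atTop (𝓝 0) := by
  rw [Complex.tendsto_exp_nhds_zero_iff]
  have harg (t : ℝ) : 2 * π * I * (c + s * (t * I)) = 2 * π * I * c + ↑(-(2 * π * s) * t) := by
    push_cast
    linear_combination (2 * π * s * t : ℂ) * I_mul_I
  simp only [harg, add_re, ofReal_re]
  exact tendsto_atBot_add_const_left _ _
    (tendsto_id.const_mul_atTop_of_neg (by nlinarith [pi_pos]))

lemma exists_tendsto_Theta_sub_div_Theta_atTop (z ν₀ : ℂ) {θ : ℝ} (hθ₀ : 0 ≤ θ) (hθ₁ : θ < 1)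
    (hν₀ : θ = 0 → ∀ k : ℤ, ν₀ ≠ k) :
    ∃ L, Tendsto (fun t : ℝ => Theta (z - (ν₀ + θ * (t * I))) (t * I) /
      Theta (ν₀ + θ * (t * I)) (t * I)) atTop (𝓝 L) := by
  obtain ⟨x₀, hx, hx₀⟩ : ∃ x₀ : ℂ, Tendsto (fun t : ℝ => cexp (2 * π * I * (ν₀ + θ * (t * I))))
      atTop (𝓝 x₀) ∧ x₀ ≠ 1 := by
    rcases hθ₀.eq_or_lt with rfl | hθ
    · refine ⟨cexp (2 * π * I * ν₀), by simp, fun h => ?_⟩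
      obtain ⟨k, hk⟩ := Complex.exp_eq_one_iff.1 h
      exact hν₀ rfl k (mul_left_cancel₀ two_pi_I_ne_zero (by rw [hk]; ring))
    · exact ⟨0, tendsto_cexp_two_pi_I_mul_add_mul_I_atTop ν₀ hθ, zero_ne_one⟩
  have hq : Tendsto (fun t : ℝ => cexp (2 * π * I * (t * I))) atTop (𝓝 0) := by
    simpa using tendsto_cexp_two_pi_I_mul_add_mul_I_atTop 0 one_pos
  have hqx : Tendsto (fun t : ℝ => cexp (2 * π * I * (t * I)) /
      cexp (2 * π * I * (ν₀ + θ * (t * I)))) atTop (𝓝 0) := by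
    refine (tendsto_cexp_two_pi_I_mul_add_mul_I_atTop (-ν₀) (sub_pos.2 hθ₁)).congr fun t => ?_
    rw [← Complex.exp_sub]
    push_cast
    ring_nf
  exact ⟨_, tendsto_Theta_sub_div_Theta z hx hx₀ hq hqx⟩

theorem Ell_limit_at_cusp_general
    (d : ℕ)
    (q : Fin d → ℚ)
    (G : Finset (Fin d → ℚ))
    (hGrep : ∀ p ∈ G, ∀ j, 0 ≤ p j ∧ p j < 1)
    (z : ℂ)
    (hz : ∀ j : Fin d, ∀ n₁ ∈ G, ∀ t : ℤ, (q j : ℂ) * z + (n₁ j : ℂ) ≠ (t : ℂ)) :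
    ∃ L : ℂ, Filter.Tendsto (fun t : ℝ => Ell d q G z (t * Complex.I))
      Filter.atTop (nhds L) := by
  have hsummand : ∀ n ∈ G, ∀ n₁ ∈ G, ∀ j, ∃ L, Tendsto (fun t : ℝ =>
      cexp (-(2 * π * I * z * (n j : ℂ))) *
        Theta ((1 - (q j : ℂ)) * z - (n j : ℂ) * (t * I) - (n₁ j : ℂ)) (t * I) /
        Theta ((q j : ℂ) * z + (n j : ℂ) * (t * I) + (n₁ j : ℂ)) (t * I)) atTop (𝓝 L) := by
    intro n hn n₁ hn₁ j
    obtain ⟨L, hL⟩ := exists_tendsto_Theta_sub_div_Theta_atTop z (q j * z + n₁ j) (θ := n j)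
      (mod_cast (hGrep n hn j).1) (mod_cast (hGrep n hn j).2) fun _ => hz j n₁ hn₁
    refine ⟨_, (hL.const_mul (cexp (-(2 * π * I * z * (n j : ℂ))))).congr fun t => ?_⟩
    rw [mul_div_assoc, ofReal_ratCast]
    congr 3 <;> ring
  choose! L hL using hsummand
  exact ⟨_, (tendsto_finsetSum _ fun n hn => tendsto_finsetSum _ fun n₁ hn₁ =>
    tendsto_finsetProd _ fun j _ => hL n hn n₁ hn₁ j).const_mul _⟩

/-- for fixed `z` with `q_j z + θ_j(n₁) ∉ ℤ` for all `j` and all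
`n₁ ∈ G`, the limit of `Ell(W/G, z, it)` as `t → +∞` exists (no negative
powers of `q` at the cusp: `Ell` is a *weak* Jacobi form). -/
theorem Ell_limit_at_cusp
    (d : ℕ) (hd : 1 ≤ d)
    (A : Matrix (Fin d) (Fin d) ℕ)
    (hA : (A.map (fun a => (a : ℚ))).det ≠ 0)
    (q : Fin d → ℚ)
    (hq : (A.map (fun a => (a : ℚ))).mulVec q = fun _ => 1)
    (hqpos : ∀ j, 0 < q j)
    (G : Finset (Fin d → ℚ))
    (hGrep : ∀ p ∈ G, ∀ j, 0 ≤ p j ∧ p j < 1)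
    (hGaut : ∀ p ∈ G, ∀ i, ∃ t : ℤ, ∑ j, (A i j : ℚ) * p j = (t : ℚ))
    (hGzero : (fun _ => 0 : Fin d → ℚ) ∈ G)
    (hGadd : ∀ p ∈ G, ∀ p' ∈ G, (fun j => Int.fract (p j + p' j)) ∈ G)
    (hGneg : ∀ p ∈ G, (fun j => Int.fract (-(p j))) ∈ G)
    (hJW : (fun j => Int.fract (q j)) ∈ G)
    (hGsum : ∀ p ∈ G, ∃ t : ℤ, ∑ j, p j = (t : ℚ))
    (z : ℂ)
    (hz : ∀ j : Fin d, ∀ n₁ ∈ G, ∀ t : ℤ, (q j : ℂ) * z + (n₁ j : ℂ) ≠ (t : ℂ)) :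
    ∃ L : ℂ, Filter.Tendsto (fun t : ℝ => Ell d q G z (t * Complex.I))
      Filter.atTop (nhds L) :=
  Ell_limit_at_cusp_general d q G hGrep z hz
end

section
/- Let A be an invertible d×d integer matrix with q := A^{−1}(1,…,1)ᵀ ∈ ℚ^d, and let G ⊆ {p ∈ ℚ^d/ℤ^d : Ap ∈ ℤ^d} be a subgroup such that q mod ℤ^d ∈ G and Σ_j p_j ∈ ℤ for every p ∈ G. Define the dual group G^∨ = {h ∈ ℚ^d/ℤ^d : Aᵀh ∈ ℤ^d and hᵀAg ∈ ℤ for every g ∈ G}. Then G^∨ is a subgroup of {h ∈ ℚ^d/ℤ^d : Aᵀh ∈ ℤ^d}, it contains q^∨ := (Aᵀ)^{−1}(1,…,1)ᵀ mod ℤ^d, and Σ_i h_i ∈ ℤ for every h ∈ G^∨. (In other words, if ⟨J_W⟩ ⊆ G ⊆ SL_W then ⟨J_{W^∨}⟩ ⊆ G^∨ ⊆ SL_{W^∨}.) -/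
/-- The lattice `ℤ^d` inside `ℚ^d`, as an additive subgroup. -/
def intLat (d : ℕ) : AddSubgroup (Fin d → ℚ) where
  carrier := {p | ∀ j, ∃ m : ℤ, p j = (m : ℚ)}
  zero_mem' := fun j => ⟨0, by simp⟩
  add_mem' := by
    intro a b ha hb j
    obtain ⟨s, hs⟩ := ha j
    obtain ⟨t, ht⟩ := hb j
    exact ⟨s + t, by simp [Pi.add_apply, hs, ht]⟩
  neg_mem' := by
    intro a ha j
    obtain ⟨s, hs⟩ := ha j
    exact ⟨-s, by simp [Pi.neg_apply, hs]⟩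

/-- The group `ℚ^d/ℤ^d`. -/
abbrev Qd (d : ℕ) := (Fin d → ℚ) ⧸ intLat d

/-- The quotient map `ℚ^d → ℚ^d/ℤ^d`. -/
def mkQ {d : ℕ} (p : Fin d → ℚ) : Qd d := QuotientAddGroup.mk p

/-- The Berglund–Hübsch dual `G^∨ = {h ∈ ℚ^d/ℤ^d : Aᵀh ∈ ℤ^d and hᵀAg ∈ ℤ for
every g ∈ G}` of a subgroup `G ⊆ {p ∈ ℚ^d/ℤ^d : Ap ∈ ℤ^d}`. -/
def dualSet (d : ℕ) (A : Matrix (Fin d) (Fin d) ℤ) (G : Set (Qd d)) : Set (Qd d) :=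
  {y | ∀ h : Fin d → ℚ, mkQ h = y →
    ((∀ j, ∃ m : ℤ, ∑ i, (A i j : ℚ) * h i = (m : ℚ)) ∧
      ∀ x ∈ G, ∀ g : Fin d → ℚ, mkQ g = x →
        ∃ m : ℤ, ∑ i, ∑ j, h i * (A i j : ℚ) * g j = (m : ℚ))}

private lemma intp_add {a b : ℚ} (ha : ∃ m : ℤ, a = (m:ℚ)) (hb : ∃ m : ℤ, b = (m:ℚ)) :
    ∃ m : ℤ, a + b = (m:ℚ) := by
  obtain ⟨s, hs⟩ := ha; obtain ⟨t, ht⟩ := hb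
  exact ⟨s + t, by rw [hs, ht]; push_cast; ring⟩

private lemma intp_mul {a b : ℚ} (ha : ∃ m : ℤ, a = (m:ℚ)) (hb : ∃ m : ℤ, b = (m:ℚ)) :
    ∃ m : ℤ, a * b = (m:ℚ) := by
  obtain ⟨s, hs⟩ := ha; obtain ⟨t, ht⟩ := hb
  exact ⟨s * t, by rw [hs, ht]; push_cast; ring⟩

private lemma intp_sum {d : ℕ} {f : Fin d → ℚ} (h : ∀ i, ∃ m : ℤ, f i = (m:ℚ)) :
    ∃ m : ℤ, ∑ i, f i = (m:ℚ) := by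
  choose g hg using h
  refine ⟨∑ i, g i, ?_⟩
  push_cast
  exact Finset.sum_congr rfl fun i _ => hg i

private lemma mem_dual_of_lift (d : ℕ) (A : Matrix (Fin d) (Fin d) ℤ) (G : Set (Qd d))
    (hGaut : ∀ x ∈ G, ∀ p : Fin d → ℚ, mkQ p = x →
      ∀ i, ∃ m : ℤ, ∑ j, (A i j : ℚ) * p j = (m : ℚ))
    (h : Fin d → ℚ)
    (H1 : ∀ j, ∃ m : ℤ, ∑ i, (A i j : ℚ) * h i = (m : ℚ))
    (H2 : ∀ x ∈ G, ∀ g : Fin d → ℚ, mkQ g = x →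
        ∃ m : ℤ, ∑ i, ∑ j, h i * (A i j : ℚ) * g j = (m : ℚ)) :
    mkQ h ∈ dualSet d A G := by
  intro h' hh'
  have hmem : -h' + h ∈ intLat d := (QuotientAddGroup.eq (s := intLat d)).mp hh'
  have hn : ∀ i, ∃ m : ℤ, h' i - h i = (m:ℚ) := by
    intro i
    obtain ⟨m, hm⟩ := hmem i
    refine ⟨-m, ?_⟩
    have hm' : -h' i + h i = (m:ℚ) := hm
    push_cast
    linarith
  constructor
  · intro j
    have key : ∑ i, (A i j : ℚ) * h' i
        = (∑ i, (A i j : ℚ) * h i) + ∑ i, (A i j : ℚ) * (h' i - h i) := by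
      rw [← Finset.sum_add_distrib]
      exact Finset.sum_congr rfl fun i _ => by ring
    rw [key]
    exact intp_add (H1 j) (intp_sum fun i => intp_mul ⟨A i j, rfl⟩ (hn i))
  · intro x hx g hg
    have key : ∑ i, ∑ j, h' i * (A i j : ℚ) * g j
        = (∑ i, ∑ j, h i * (A i j : ℚ) * g j)
          + ∑ i, (h' i - h i) * ∑ j, (A i j : ℚ) * g j := by
      rw [← Finset.sum_add_distrib]
      refine Finset.sum_congr rfl fun i _ => ?_
      rw [Finset.mul_sum, ← Finset.sum_add_distrib]
      exact Finset.sum_congr rfl fun j _ => by ring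
    rw [key]
    exact intp_add (H2 x hx g hg) (intp_sum fun i => intp_mul (hn i) (hGaut x hx g hg i))

/-- if `⟨J_W⟩ ⊆ G ⊆ SL_W` then `⟨J_{W^∨}⟩ ⊆ G^∨ ⊆ SL_{W^∨}`:
the dual group `G^∨` is a subgroup of `{h ∈ ℚ^d/ℤ^d : Aᵀh ∈ ℤ^d}`, contains
`q^∨ = (Aᵀ)^{−1}(1,…,1)ᵀ mod ℤ^d`, and every element has integral coordinate
sum. -/
theorem dual_group_between_JW_and_SLW
    (d : ℕ) (A : Matrix (Fin d) (Fin d) ℤ)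
    (hA : (A.map (fun a => (a : ℚ))).det ≠ 0)
    (q : Fin d → ℚ)
    (hq : (A.map (fun a => (a : ℚ))).mulVec q = fun _ => 1)
    (G : Set (Qd d))
    (hGaut : ∀ x ∈ G, ∀ p : Fin d → ℚ, mkQ p = x →
      ∀ i, ∃ m : ℤ, ∑ j, (A i j : ℚ) * p j = (m : ℚ))
    (hG0 : (0 : Qd d) ∈ G)
    (hGadd : ∀ x ∈ G, ∀ y ∈ G, x + y ∈ G)
    (hGneg : ∀ x ∈ G, -x ∈ G)
    (hGq : mkQ q ∈ G)
    (hGsum : ∀ x ∈ G, ∀ p : Fin d → ℚ, mkQ p = x → ∃ m : ℤ, ∑ j, p j = (m : ℚ))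
    (qv : Fin d → ℚ)
    (hqv : ((A.map (fun a => (a : ℚ))).transpose).mulVec qv = fun _ => 1) :
    ((0 : Qd d) ∈ dualSet d A G ∧
      (∀ x ∈ dualSet d A G, ∀ y ∈ dualSet d A G, x + y ∈ dualSet d A G) ∧
      (∀ x ∈ dualSet d A G, -x ∈ dualSet d A G)) ∧
    (∀ y ∈ dualSet d A G, ∀ h : Fin d → ℚ, mkQ h = y →
      ∀ j, ∃ m : ℤ, ∑ i, (A i j : ℚ) * h i = (m : ℚ)) ∧
    mkQ qv ∈ dualSet d A G ∧
    (∀ y ∈ dualSet d A G, ∀ h : Fin d → ℚ, mkQ h = y →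
      ∃ m : ℤ, ∑ i, h i = (m : ℚ)) := by
  -- `Aq = (1,…,1)` coordinatewise
  have hq' : ∀ i, ∑ j, (A i j : ℚ) * q j = 1 := by
    intro i
    have := congrFun hq i
    simpa [Matrix.mulVec, dotProduct, Matrix.map_apply] using this
  -- `Aᵀ qv = (1,…,1)` coordinatewise
  have hqv' : ∀ j, ∑ i, (A i j : ℚ) * qv i = 1 := by
    intro j
    have := congrFun hqv j
    simpa [Matrix.mulVec, dotProduct, Matrix.map_apply, Matrix.transpose_apply] using this
  refine ⟨⟨?_, ?_, ?_⟩, ?_, ?_, ?_⟩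
  · -- zero
    have h0 : mkQ (0 : Fin d → ℚ) = (0 : Qd d) := rfl
    rw [← h0]
    refine mem_dual_of_lift d A G hGaut 0 (fun j => ⟨0, by simp⟩) ?_
    intro x hx g hg
    exact ⟨0, by simp⟩
  · -- add
    intro x hx y hy
    obtain ⟨h1, hh1⟩ := QuotientAddGroup.mk_surjective x
    obtain ⟨h2, hh2⟩ := QuotientAddGroup.mk_surjective y
    have hh1' : mkQ h1 = x := hh1
    have hh2' : mkQ h2 = y := hh2
    obtain ⟨H11, H12⟩ := hx h1 hh1'
    obtain ⟨H21, H22⟩ := hy h2 hh2'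
    have hsum : mkQ (h1 + h2) = x + y := by rw [← hh1', ← hh2']; rfl
    rw [← hsum]
    refine mem_dual_of_lift d A G hGaut (h1 + h2) ?_ ?_
    · intro j
      have key : ∑ i, (A i j : ℚ) * (h1 + h2) i
          = (∑ i, (A i j : ℚ) * h1 i) + ∑ i, (A i j : ℚ) * h2 i := by
        rw [← Finset.sum_add_distrib]
        exact Finset.sum_congr rfl fun i _ => by simp [Pi.add_apply]; try ring
      rw [key]; exact intp_add (H11 j) (H21 j)
    · intro z hz g hg
      have key : ∑ i, ∑ j, (h1 + h2) i * (A i j : ℚ) * g j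
          = (∑ i, ∑ j, h1 i * (A i j : ℚ) * g j) + ∑ i, ∑ j, h2 i * (A i j : ℚ) * g j := by
        rw [← Finset.sum_add_distrib]
        refine Finset.sum_congr rfl fun i _ => ?_
        rw [← Finset.sum_add_distrib]
        exact Finset.sum_congr rfl fun j _ => by simp [Pi.add_apply]; try ring
      rw [key]; exact intp_add (H12 z hz g hg) (H22 z hz g hg)
  · -- neg
    intro x hx
    obtain ⟨h1, hh1⟩ := QuotientAddGroup.mk_surjective x
    have hh1' : mkQ h1 = x := hh1
    obtain ⟨H11, H12⟩ := hx h1 hh1'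
    have hneg : mkQ (-h1) = -x := by rw [← hh1']; rfl
    rw [← hneg]
    refine mem_dual_of_lift d A G hGaut (-h1) ?_ ?_
    · intro j
      obtain ⟨m, hm⟩ := H11 j
      refine ⟨-m, ?_⟩
      have : ∑ i, (A i j : ℚ) * (-h1) i = -∑ i, (A i j : ℚ) * h1 i := by
        rw [← Finset.sum_neg_distrib]
        exact Finset.sum_congr rfl fun i _ => by simp [Pi.neg_apply]; try ring
      rw [this, hm]; push_cast; ring
    · intro z hz g hg
      obtain ⟨m, hm⟩ := H12 z hz g hg
      refine ⟨-m, ?_⟩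
      have : ∑ i, ∑ j, (-h1) i * (A i j : ℚ) * g j
          = -∑ i, ∑ j, h1 i * (A i j : ℚ) * g j := by
        rw [← Finset.sum_neg_distrib]
        refine Finset.sum_congr rfl fun i _ => ?_
        rw [← Finset.sum_neg_distrib]
        exact Finset.sum_congr rfl fun j _ => by simp [Pi.neg_apply]; try ring
      rw [this, hm]; push_cast; ring
  · -- Aᵀ h integral
    exact fun y hy h hh j => (hy h hh).1 j
  · -- qv ∈ dual
    refine mem_dual_of_lift d A G hGaut qv (fun j => ⟨1, by rw [hqv' j]; norm_num⟩) ?_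
    intro x hx g hg
    obtain ⟨m, hm⟩ := hGsum x hx g hg
    refine ⟨m, ?_⟩
    calc ∑ i, ∑ j, qv i * (A i j : ℚ) * g j
        = ∑ j, ∑ i, qv i * (A i j : ℚ) * g j := Finset.sum_comm
      _ = ∑ j, (∑ i, (A i j : ℚ) * qv i) * g j := by
          refine Finset.sum_congr rfl fun j _ => ?_
          rw [Finset.sum_mul]
          exact Finset.sum_congr rfl fun i _ => by ring
      _ = ∑ j, g j := by
          refine Finset.sum_congr rfl fun j _ => ?_
          rw [hqv' j]; ring
      _ = (m : ℚ) := hm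
  · -- integral coordinate sum
    intro y hy h hh
    obtain ⟨m, hm⟩ := (hy h hh).2 (mkQ q) hGq q rfl
    refine ⟨m, ?_⟩
    calc ∑ i, h i = ∑ i, h i * ∑ j, (A i j : ℚ) * q j := by
          refine Finset.sum_congr rfl fun i _ => ?_
          rw [hq' i]; ring
      _ = ∑ i, ∑ j, h i * (A i j : ℚ) * q j := by
          refine Finset.sum_congr rfl fun i _ => ?_
          rw [Finset.mul_sum]
          exact Finset.sum_congr rfl fun j _ => by ring
      _ = (m : ℚ) := hm
end

section
/- Let A be an invertible d×d integer matrix and set SL_W = {g ∈ ℚ^d/ℤ^d : Ag ∈ ℤ^d and Σ_j g_j ∈ ℤ}. Then {h ∈ ℚ^d/ℤ^d : Aᵀh ∈ ℤ^d and hᵀAg ∈ ℤ for every g ∈ SL_W} is exactly the cyclic subgroup of ℚ^d/ℤ^d generated by (Aᵀ)^{−1}(1,…,1)ᵀ mod ℤ^d. (In other words, the dual of SL_W is the subgroup generated by the dual exponential grading operator J_{W^∨}.) -/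
open Matrix

theorem isPrincipal_span_of_finite {R K : Type*} [CommRing R] [IsDomain R] [IsPrincipalIdealRing R]
    [Field K] [Algebra R K] [IsFractionRing R K] {s : Set K} (hs : s.Finite) :
    (Submodule.span R s).IsPrincipal :=
  FractionalIdeal.isPrincipal
    ⟨_, FractionalIdeal.isFractional_of_fg (Submodule.fg_span hs)⟩

theorem mkQ_eq_mkQ_iff {d : ℕ} {p q : Fin d → ℚ} : mkQ p = mkQ q ↔ p - q ∈ intLat d :=
  QuotientAddGroup.eq_iff_sub_mem

theorem mem_intLat_iff_exists_intCast {d : ℕ} {p : Fin d → ℚ} :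
    p ∈ intLat d ↔ ∃ v : Fin d → ℤ, p = fun i => (v i : ℚ) :=
  ⟨fun hp => ⟨fun i => (hp i).choose, funext fun i => (hp i).choose_spec⟩,
    fun ⟨v, hv⟩ i => ⟨v i, congrFun hv i⟩⟩

theorem zsmul_mkQ {d : ℕ} (n : ℤ) (p : Fin d → ℚ) : n • mkQ p = mkQ (n • p) :=
  (QuotientAddGroup.mk_zsmul _ p n).symm

theorem single_one_mem_intLat {d : ℕ} (i : Fin d) : Pi.single i (1 : ℚ) ∈ intLat d :=
  mem_intLat_iff_exists_intCast.2
    ⟨Pi.single i 1, by ext j; rcases eq_or_ne j i with rfl | hj <;> simp [*]⟩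

theorem exists_dotProduct_eq_intCast {d : ℕ} {p v : Fin d → ℚ} (hp : p ∈ intLat d)
    (hv : v ∈ intLat d) : ∃ m : ℤ, p ⬝ᵥ v = m := by
  obtain ⟨p, rfl⟩ := mem_intLat_iff_exists_intCast.1 hp
  obtain ⟨v, rfl⟩ := mem_intLat_iff_exists_intCast.1 hv
  exact ⟨p ⬝ᵥ v, by simp [dotProduct]⟩

theorem intCast_mulVec_mem_intLat {d : ℕ} (B : Matrix (Fin d) (Fin d) ℤ) {v : Fin d → ℚ}
    (hv : v ∈ intLat d) : B.map (Int.cast : ℤ → ℚ) *ᵥ v ∈ intLat d := by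
  obtain ⟨v, rfl⟩ := mem_intLat_iff_exists_intCast.1 hv
  exact mem_intLat_iff_exists_intCast.2 ⟨B *ᵥ v, by ext i; simp [mulVec, dotProduct]⟩

theorem exists_sub_zsmul_mem_intLat {d : ℕ} {q h : Fin d → ℚ}
    (H : ∀ v ∈ intLat d, (∃ m : ℤ, q ⬝ᵥ v = m) → ∃ m : ℤ, h ⬝ᵥ v = m) :
    ∃ k : ℤ, h - k • q ∈ intLat d := by
  obtain ⟨s, hS⟩ :=
    (isPrincipal_span_of_finite (R := ℤ) ((Set.finite_range q).insert 1)).principal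
  obtain ⟨a, v₀, hv₀, hs⟩ : ∃ a : ℤ, ∃ v₀ ∈ intLat d, s = a + q ⬝ᵥ v₀ := by
    obtain ⟨a, z, hz, hs⟩ := Submodule.mem_span_insert.1 (hS ▸ Submodule.mem_span_singleton_self s)
    obtain ⟨c, rfl⟩ := (Submodule.mem_span_range_iff_exists_fun ℤ).1 hz
    refine ⟨a, fun i => (c i : ℚ), mem_intLat_iff_exists_intCast.2 ⟨c, rfl⟩, ?_⟩
    simp [hs, dotProduct, mul_comm]
  have hmul : ∀ x ∈ Submodule.span ℤ (insert 1 (Set.range q)), ∃ t : ℤ, x = t * s := fun x hx => by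
    obtain ⟨t, rfl⟩ := Submodule.mem_span_singleton.1 (hS ▸ hx)
    exact ⟨t, zsmul_eq_mul s t⟩
  obtain ⟨M, hM⟩ := hmul 1 (Submodule.subset_span (Set.mem_insert 1 _))
  obtain ⟨K, hK⟩ := H (M • v₀) (zsmul_mem hv₀ M) ⟨1 - M * a, by
    rw [dotProduct_smul, zsmul_eq_mul]; push_cast; linear_combination -M * hs - hM⟩
  refine ⟨K, fun i => ?_⟩
  obtain ⟨t, ht⟩ := hmul (q i) (Submodule.subset_span (Set.mem_insert_of_mem 1 ⟨i, rfl⟩))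
  obtain ⟨r, hr⟩ := H (Pi.single i 1 - t • v₀)
    (sub_mem (single_one_mem_intLat i) (zsmul_mem hv₀ t)) ⟨t * a, by
      rw [dotProduct_sub, dotProduct_single, dotProduct_smul, zsmul_eq_mul]; push_cast
      linear_combination ht + t * hs⟩
  refine ⟨r, ?_⟩
  rw [dotProduct_sub, dotProduct_single, dotProduct_smul, zsmul_eq_mul] at hr
  rw [dotProduct_smul, zsmul_eq_mul] at hK
  rw [Pi.sub_apply, Pi.smul_apply, zsmul_eq_mul]
  linear_combination hr - K * ht + t * s * hK + t * (h ⬝ᵥ v₀) * hM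

def SLW (d : ℕ) (A : Matrix (Fin d) (Fin d) ℤ) : Set (Qd d) :=
  {x | ∀ p : Fin d → ℚ, mkQ p = x →
    ((∀ i, ∃ m : ℤ, ∑ j, (A i j : ℚ) * p j = (m : ℚ)) ∧ ∃ m : ℤ, ∑ j, p j = (m : ℚ))}

section

variable {d : ℕ} (A : Matrix (Fin d) (Fin d) ℤ)

theorem sum_intCast_mul_eq_mulVec (p : Fin d → ℚ) (i : Fin d) :
    ∑ j, (A i j : ℚ) * p j = (A.map (Int.cast : ℤ → ℚ) *ᵥ p) i := by
  simp [mulVec, dotProduct]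

theorem sum_intCast_mul_eq_vecMul (h : Fin d → ℚ) (j : Fin d) :
    ∑ i, (A i j : ℚ) * h i = (h ᵥ* A.map (Int.cast : ℤ → ℚ)) j := by
  simp [vecMul, dotProduct, mul_comm]

theorem sum_sum_mul_intCast_mul_eq_dotProduct_mulVec (h g : Fin d → ℚ) :
    ∑ i, ∑ j, h i * (A i j : ℚ) * g j = h ⬝ᵥ (A.map (Int.cast : ℤ → ℚ) *ᵥ g) := by
  simp [mulVec, dotProduct, Finset.mul_sum, mul_assoc]

theorem mkQ_mem_SLW_iff {g : Fin d → ℚ} :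
    mkQ g ∈ SLW d A ↔
      A.map (Int.cast : ℤ → ℚ) *ᵥ g ∈ intLat d ∧ ∃ m : ℤ, ∑ j, g j = m := by
  simp only [SLW, Set.mem_ofPred_eq, sum_intCast_mul_eq_mulVec]
  refine ⟨fun hg => hg g rfl, fun ⟨hAg, m, hm⟩ p hp => ?_⟩
  have hpg := mkQ_eq_mkQ_iff.1 hp
  obtain ⟨v, hv⟩ := mem_intLat_iff_exists_intCast.1 hpg
  rw [show p = g + (p - g) by abel, mulVec_add]
  refine ⟨add_mem hAg (intCast_mulVec_mem_intLat A hpg), m + ∑ j, v j, ?_⟩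
  simp [Finset.sum_add_distrib, hm, hv]

theorem mkQ_mem_dualSet_iff {G : Set (Qd d)}
    (hG : ∀ g, mkQ g ∈ G → A.map (Int.cast : ℤ → ℚ) *ᵥ g ∈ intLat d) {h : Fin d → ℚ} :
    mkQ h ∈ dualSet d A G ↔
      h ᵥ* A.map (Int.cast : ℤ → ℚ) ∈ intLat d ∧
        ∀ g, mkQ g ∈ G → ∃ m : ℤ, h ⬝ᵥ (A.map (Int.cast : ℤ → ℚ) *ᵥ g) = m := by
  simp only [dualSet, Set.mem_ofPred_eq, sum_intCast_mul_eq_vecMul,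
    sum_sum_mul_intCast_mul_eq_dotProduct_mulVec]
  refine ⟨fun hh => ⟨(hh h rfl).1, fun g hg => (hh h rfl).2 _ hg g rfl⟩, ?_⟩
  rintro ⟨hAh, hpair⟩ h' hh'
  have hh'h := mkQ_eq_mkQ_iff.1 hh'
  rw [show h' = h + (h' - h) by abel]
  refine ⟨?_, fun _ hg g hgx => ?_⟩
  · rw [add_vecMul]
    refine add_mem hAh ?_
    rw [← mulVec_transpose, ← transpose_map]
    exact intCast_mulVec_mem_intLat Aᵀ hh'h
  · subst hgx
    obtain ⟨a, ha⟩ := hpair g hg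
    obtain ⟨b, hb⟩ := exists_dotProduct_eq_intCast hh'h (hG g hg)
    exact ⟨a + b, by rw [add_dotProduct, ha, hb]; push_cast; ring⟩

end

/-- the dual of `SL_W = {g ∈ ℚ^d/ℤ^d : Ag ∈ ℤ^d, Σ_j g_j ∈ ℤ}` is
exactly the cyclic subgroup of `ℚ^d/ℤ^d` generated by the dual exponential
grading operator `J_{W^∨} = (Aᵀ)^{−1}(1,…,1)ᵀ mod ℤ^d`. -/
theorem dual_of_SLW_eq_cyclic_JWdual
    (d : ℕ) (A : Matrix (Fin d) (Fin d) ℤ)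
    (hA : (A.map (fun a => (a : ℚ))).det ≠ 0)
    (qv : Fin d → ℚ)
    (hqv : ((A.map (fun a => (a : ℚ))).transpose).mulVec qv = fun _ => 1) :
    dualSet d A
        {x : Qd d | ∀ p : Fin d → ℚ, mkQ p = x →
          ((∀ i, ∃ m : ℤ, ∑ j, (A i j : ℚ) * p j = (m : ℚ)) ∧
            ∃ m : ℤ, ∑ j, p j = (m : ℚ))} =
      Set.range (fun n : ℤ => n • mkQ qv) := by
  set Aq := A.map (Int.cast : ℤ → ℚ)
  have hqv' : qv ᵥ* Aq = 1 := by rw [← mulVec_transpose, hqv]; rfl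
  have hsum (g : Fin d → ℚ) : qv ⬝ᵥ (Aq *ᵥ g) = ∑ j, g j := by
    rw [dotProduct_mulVec, hqv', one_dotProduct]
  have hSLW (g : Fin d → ℚ) (hg : mkQ g ∈ SLW d A) : Aq *ᵥ g ∈ intLat d :=
    ((mkQ_mem_SLW_iff A).1 hg).1
  change dualSet d A (SLW d A) = _
  ext y
  obtain ⟨h, rfl⟩ : ∃ h, mkQ h = y := QuotientAddGroup.mk_surjective y
  simp only [Set.mem_range, zsmul_mkQ]
  constructor
  · intro hh
    obtain ⟨-, hpair⟩ := (mkQ_mem_dualSet_iff A hSLW).1 hh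
    obtain ⟨k, hk⟩ := exists_sub_zsmul_mem_intLat (q := qv) (h := h) fun v hv ⟨m, hm⟩ => by
      have hg : Aq *ᵥ (Aq⁻¹ *ᵥ v) = v := by
        rw [mulVec_mulVec, mul_nonsing_inv _ (isUnit_iff_ne_zero.2 hA), one_mulVec]
      have hpair_v := hpair _ ((mkQ_mem_SLW_iff A).2 ⟨hg ▸ hv, m, by rw [← hsum, hg, hm]⟩)
      rwa [hg] at hpair_v
    exact ⟨k, (mkQ_eq_mkQ_iff.2 hk).symm⟩
  · rintro ⟨n, hn⟩
    rw [← hn, mkQ_mem_dualSet_iff A hSLW, smul_vecMul, hqv']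
    refine ⟨zsmul_mem (fun _ => ⟨1, by simp⟩) n, fun g hg => ?_⟩
    obtain ⟨s, hs⟩ := ((mkQ_mem_SLW_iff A).1 hg).2
    exact ⟨n * s, by rw [smul_dotProduct, hsum, hs, zsmul_eq_mul, Int.cast_mul]⟩
end
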